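/- Let G and G* be two genomes over Σ with d_GG(G, G*) = k, and let E be a sequence of k events with G⟨E⟩ = G*. Suppose position p of G is unimportant with respect to E, and let G' be the genome obtained from G by replacing the character G[p] by any other character of Σ. Then d_GG(G', G*) ≤ d_GG(G, G*); in fact G'⟨E⟩ = G*. -/

import Mathlib

/-- An event is either a deletion `del i j` (removing the substring from position `i`
to position `j`, 1-based) or a duplication `dup i j p` (copying the substring from
position `i` to position `j` and inserting the copy after position `p`). -/
inductive GEvent where
  | del (i j : ℕ)
  | dup (i j p : ℕ)
deriving DecidableEq

/-- Applying an event to a genome (a list of characters). -/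
def applyEvent {α : Type*} (G : List α) : GEvent → List α
  | .del i j => G.take (i - 1) ++ G.drop j
  | .dup i j p => G.take p ++ ((G.drop (i - 1)).take (j - i + 1)) ++ G.drop p

/-- Validity of an event on a genome: `del i j` requires `1 ≤ i ≤ j ≤ |G|`;
`dup i j p` requires `1 ≤ i ≤ j ≤ |G|` and `p ∈ {0,…,i−1} ∪ {j,…,|G|}`. -/
def GEvent.Valid {α : Type*} (G : List α) : GEvent → Prop
  | .del i j => 1 ≤ i ∧ i ≤ j ∧ j ≤ G.length
  | .dup i j p => 1 ≤ i ∧ i ≤ j ∧ j ≤ G.length ∧ (p ≤ i - 1 ∨ (j ≤ p ∧ p ≤ G.length))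

/-- `applyEvents G E` is `G⟨E⟩`, the genome obtained by successively applying
the events of `E` to `G`. -/
def applyEvents {α : Type*} (G : List α) : List GEvent → List α
  | [] => G
  | e :: E => applyEvents (applyEvent G e) E

/-- A sequence of events is valid on `G` if each event is valid on the genome
obtained by applying the previous events. -/
def ValidSeq {α : Type*} (G : List α) : List GEvent → Prop
  | [] => True
  | e :: E => e.Valid G ∧ ValidSeq (applyEvent G e) E

/-- The copy-number profile of a genome: the number of occurrences of each character. -/
def cnp {α : Type*} [DecidableEq α] (G : List α) : α → ℕ := fun s => G.count s

/-- The Genome-to-CNP distance: the minimum length of a valid event sequence turning `G`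
into a genome with CNP `c` (`⊤` if there is none). -/
noncomputable def dGCNP {α : Type*} [DecidableEq α] (G : List α) (c : α → ℕ) : ℕ∞ :=
  sInf { k : ℕ∞ | ∃ E : List GEvent,
    ValidSeq G E ∧ (E.length : ℕ∞) = k ∧ cnp (applyEvents G E) = c }

/-- The Genome-to-Genome distance: the minimum length of a valid event sequence
turning `G` into `G'` (`⊤` if there is none). -/
noncomputable def dGG {α : Type*} (G G' : List α) : ℕ∞ :=
  sInf { k : ℕ∞ | ∃ E : List GEvent,
    ValidSeq G E ∧ (E.length : ℕ∞) = k ∧ applyEvents G E = G' }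

/-- The augmented genome of `G = g₁…gₙ`: each character is tagged with its
(1-based) position, giving the genome `(1, g₁) (2, g₂) … (n, gₙ)`. -/
def augment {α : Type*} (G : List α) : List (ℕ × α) :=
  ((List.range G.length).map (· + 1)).zip G

/-- Position `p` (1-based) of `G` is unimportant with respect to the event sequence `E`
if the character of the augmented genome tagged with `p` has no occurrence in `Ĝ⟨E⟩`. -/
def Unimportant {α : Type*} (G : List α) (E : List GEvent) (p : ℕ) : Prop :=
  ∀ x ∈ applyEvents (augment G) E, x.1 ≠ p

/-!
Tag every character of `G` with its position. Events act positionally, so they commute with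
any relabelling of the characters; in particular `G⟨E⟩` is obtained from `Ĝ⟨E⟩` by forgetting
the tags. Replacing `G[p]` by `b` amounts to relabelling the tagged character `(p, G[p])` as
`(p, b)`, and when `p` is unimportant no character tagged `p` survives in `Ĝ⟨E⟩`, so the
relabelling is invisible in the result. Validity of events only depends on lengths, so `E` stays
valid on the modified genome and witnesses the distance bound.
-/

section

variable {α β : Type*}

lemma applyEvent_map (f : α → β) (G : List α) (e : GEvent) :
    applyEvent (G.map f) e = (applyEvent G e).map f := by
  cases e <;> simp [applyEvent, List.map_take, List.map_drop]

lemma applyEvents_map (f : α → β) (G : List α) (E : List GEvent) :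
    applyEvents (G.map f) E = (applyEvents G E).map f := by
  induction E generalizing G with
  | nil => rfl
  | cons e E ih => simp [applyEvents, applyEvent_map, ih]

lemma length_applyEvent_congr {G : List α} {H : List β} (h : G.length = H.length)
    (e : GEvent) : (applyEvent G e).length = (applyEvent H e).length := by
  cases e <;> simp [applyEvent, h]

lemma GEvent.Valid.of_length_eq {G : List α} {H : List β} (h : G.length = H.length)
    {e : GEvent} (hv : e.Valid G) : e.Valid H := by
  cases e <;> simp_all [GEvent.Valid]

lemma ValidSeq.of_length_eq {G : List α} {H : List β} (h : G.length = H.length)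
    {E : List GEvent} (hv : ValidSeq G E) : ValidSeq H E := by
  induction E generalizing G H with
  | nil => trivial
  | cons e E ih => exact ⟨hv.1.of_length_eq h, ih (length_applyEvent_congr h e) hv.2⟩

lemma dGG_le_length {G G' : List α} {E : List GEvent} (hv : ValidSeq G E)
    (h : applyEvents G E = G') : dGG G G' ≤ E.length :=
  sInf_le ⟨E, hv, rfl, h⟩

lemma map_snd_augment (G : List α) : (augment G).map Prod.snd = G := by
  apply List.ext_getElem <;> simp [augment]

lemma applyEvents_eq_map_snd_augment (G : List α) (E : List GEvent) :
    applyEvents G E = (applyEvents (augment G) E).map Prod.snd := by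
  conv_lhs => rw [← map_snd_augment G]
  exact applyEvents_map _ _ _

def retag (p : ℕ) (b : α) (x : ℕ × α) : ℕ × α :=
  if x.1 = p then (p, b) else x

lemma augment_set {p : ℕ} (hp : 1 ≤ p) (G : List α) (b : α) :
    augment (G.set (p - 1) b) = (augment G).map (retag p b) := by
  apply List.ext_getElem
  · simp [augment]
  · intro j hj _
    simp only [augment, List.length_set, List.getElem_map, List.getElem_zip,
      List.getElem_range, List.getElem_set, retag]
    by_cases hjp : j = p - 1
    · simp [hjp, show p - 1 + 1 = p by omega]
    · simp [Ne.symm hjp, show j + 1 ≠ p by omega]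

lemma applyEvents_set_of_unimportant {G : List α} {E : List GEvent} {p : ℕ} (hp : 1 ≤ p)
    (hunimp : Unimportant G E p) (b : α) :
    applyEvents (G.set (p - 1) b) E = applyEvents G E := by
  have hfix : (applyEvents (augment G) E).map (retag p b) = applyEvents (augment G) E :=
    (List.map_congr_left fun x hx => if_neg (hunimp x hx)).trans (List.map_id' _)
  rw [applyEvents_eq_map_snd_augment, augment_set hp, applyEvents_map, hfix,
    ← applyEvents_eq_map_snd_augment]

end

/-- Proposition 2 of the paper: let `G`, `G*` be genomes with
`d_GG(G, G*) = k` and let `E` be a sequence of `k` events with `G⟨E⟩ = G*`.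
If position `p` of `G` is unimportant w.r.t. `E` and `G'` is obtained from `G` by
replacing the character at position `p` by any other character `b`,
then `G'⟨E⟩ = G*`, and in particular `d_GG(G', G*) ≤ d_GG(G, G*)`. -/
theorem replace_unimportant
    {α : Type*} (G Gstar : List α) (k : ℕ)
    (E : List GEvent)
    (hvalid : ValidSeq G E)
    (hlen : E.length = k)
    (happly : applyEvents G E = Gstar)
    (hdist : dGG G Gstar = (k : ℕ∞))
    (p : ℕ) (hp1 : 1 ≤ p)
    (hunimp : Unimportant G E p)
    (b : α)
    (G' : List α) (hG' : G' = G.set (p - 1) b) :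
    applyEvents G' E = Gstar ∧ dGG G' Gstar ≤ dGG G Gstar := by
  have happly' : applyEvents G' E = Gstar := by
    rw [hG', applyEvents_set_of_unimportant hp1 hunimp, happly]
  have hvalid' : ValidSeq G' E := hvalid.of_length_eq (by simp [hG'])
  refine ⟨happly', ?_⟩
  rw [hdist, ← hlen]
  exact dGG_le_length hvalid' happly'
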